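/- Let (a_k) and (b_k) be nondecreasing unbounded sequences of positive reals with a_k ≤ b_k for all k. Then there exists a nondecreasing unbounded sequence (u_k) of positive reals with a_k ≤ u_k ≤ b_k for all k, together with a strictly increasing sequence of indices (T_ℓ) such that u_{T_ℓ} = a_{T_ℓ} and u_{T_ℓ+1} = b_{T_ℓ+1} for every ℓ ≥ 1. -/

import Mathlib

/-!
Choose touching indices `T 0 < T 1 < ⋯` so sparse that `b (T ℓ + 1) ≤ a (T (ℓ + 1))`; this is
possible because `a` is unbounded. Let `u k = max (a k) (b j)`, where `j ≤ k` is the last index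
of the form `T ℓ + 1`. Then `u` is monotone and squeezed between `a` and `b`, it equals `b` at
every `T ℓ + 1`, and at `T (ℓ + 1)` the last such index is `T ℓ + 1`, so `u` equals `a` there.
-/

open Filter

theorem exists_strictMono_forall_succ_of_eventually {P : ℕ → ℕ → Prop}
    (h : ∀ n, ∀ᶠ k in atTop, P n k) :
    ∃ T : ℕ → ℕ, StrictMono T ∧ ∀ ℓ, P (T ℓ) (T (ℓ + 1)) := by
  choose next hnext_gt hnext using fun n => ((eventually_gt_atTop n).and (h n)).exists
  refine ⟨fun ℓ => next^[ℓ] 0, strictMono_nat_of_lt_succ fun ℓ => ?_, fun ℓ => ?_⟩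
  · simpa only [Function.iterate_succ_apply'] using hnext_gt _
  · simpa only [Function.iterate_succ_apply'] using hnext _

section SqueezeSeq

variable {α : Type*} [LinearOrder α] {a b : ℕ → α} {S : Set ℕ} {k : ℕ}

open Classical

/-- The larger of `a k` and `b j`, where `j` is the last element of `S` up to `k`
(`j = 0` if there is none). -/
noncomputable def squeezeSeq (a b : ℕ → α) (S : Set ℕ) (k : ℕ) : α :=
  max (a k) (b (Nat.findGreatest (· ∈ S) k))

theorem le_squeezeSeq : a k ≤ squeezeSeq a b S k :=
  le_max_left _ _

theorem squeezeSeq_le (hb : Monotone b) (hab : a ≤ b) : squeezeSeq a b S k ≤ b k :=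
  max_le (hab k) (hb (Nat.findGreatest_le k))

theorem monotone_squeezeSeq (ha : Monotone a) (hb : Monotone b) : Monotone (squeezeSeq a b S) :=
  fun _ _ hmn => max_le_max (ha hmn) (hb (Nat.findGreatest_mono_right _ hmn))

theorem squeezeSeq_of_mem (hab : a ≤ b) (hk : k ∈ S) : squeezeSeq a b S k = b k := by
  rw [squeezeSeq, Nat.findGreatest_eq hk]
  exact max_eq_right (hab k)

theorem findGreatest_le_of_forall_le {p : ℕ → Prop} [DecidablePred p] {j : ℕ}
    (h : ∀ i, p i → i ≤ k → i ≤ j) : Nat.findGreatest p k ≤ j := by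
  rcases eq_or_ne (Nat.findGreatest p k) 0 with h0 | h0
  · exact h0 ▸ j.zero_le
  · exact h _ (Nat.findGreatest_of_ne_zero rfl h0) (Nat.findGreatest_le k)

theorem squeezeSeq_eq_left (hb : Monotone b) {j : ℕ} (hS : ∀ i ∈ S, i ≤ k → i ≤ j)
    (hj : b j ≤ a k) : squeezeSeq a b S k = a k :=
  max_eq_left ((hb (findGreatest_le_of_forall_le hS)).trans hj)

end SqueezeSeq

/-- Given nondecreasing unbounded sequences `a ≤ b` of positive reals, there is a
nondecreasing unbounded sequence `u` squeezed between them that touches `a` and `b`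
along a strictly increasing sequence of indices. -/
theorem stmt1 (a b : ℕ → ℝ) (hapos : ∀ k, 0 < a k)
    (hamono : Monotone a) (hbmono : Monotone b)
    (haunb : Tendsto a atTop atTop)
    (hab : ∀ k, a k ≤ b k) :
    ∃ u : ℕ → ℝ, (∀ k, 0 < u k) ∧ Monotone u ∧ Tendsto u atTop atTop ∧
      (∀ k, a k ≤ u k ∧ u k ≤ b k) ∧
      ∃ T : ℕ → ℕ, StrictMono T ∧
        ∀ ℓ, 1 ≤ ℓ → u (T ℓ) = a (T ℓ) ∧ u (T ℓ + 1) = b (T ℓ + 1) := by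
  obtain ⟨T, hT, hba⟩ := exists_strictMono_forall_succ_of_eventually
    fun n => haunb.eventually_ge_atTop (b (n + 1))
  set S := Set.range fun ℓ => T ℓ + 1
  refine ⟨squeezeSeq a b S, fun k => (hapos k).trans_le le_squeezeSeq,
    monotone_squeezeSeq hamono hbmono, tendsto_atTop_mono (fun _ => le_squeezeSeq) haunb,
    fun k => ⟨le_squeezeSeq, squeezeSeq_le hbmono hab⟩, T, hT, fun ℓ hℓ => ?_⟩
  obtain ⟨m, rfl⟩ : ∃ m, ℓ = m + 1 := ⟨ℓ - 1, by omega⟩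
  have hS : ∀ i ∈ S, i ≤ T (m + 1) → i ≤ T m + 1 := by
    rintro _ ⟨i, rfl⟩ hi
    have : i < m + 1 := hT.lt_iff_lt.mp hi
    exact Nat.succ_le_succ (hT.monotone (by omega))
  exact ⟨squeezeSeq_eq_left hbmono hS (hba m), squeezeSeq_of_mem hab ⟨m + 1, rfl⟩⟩
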